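/- Suppose the self-similar group G is contracting with nucleus N, the finite symmetric generating set S contains N, p ≥ 1, and η_{p,n₀} < 1 for some n₀ ≥ 1. Then for every integer l ≥ 2 there exists a constant C > 0 such that for every g ∈ G the sum Σ_{v ∈ X*, l(g|_v) ≥ l} l(g|_v)^p, taken over all finite words v whose section has word length at least l, is at most C·l(g)^p (in particular this sum is finite). (Proposition 4.4 of the paper.) -/

import Mathlib

open Filter Topology
open scoped ENNReal NNReal

/-- A self-similar group: a group `G` acting on the set of finite words `List X`
by length-preserving bijections, together with a section (restriction) map. -/
structure SelfSimilarGroup (X : Type*) (G : Type*) [Group G] where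
  act : G → List X → List X
  sec : G → List X → G
  length_act : ∀ g v, (act g v).length = v.length
  act_append : ∀ g v w, act g (v ++ w) = act g v ++ act (sec g v) w
  sec_append : ∀ g v w, sec g (v ++ w) = sec (sec g v) w
  act_one : ∀ v, act 1 v = v
  sec_one : ∀ v, sec 1 v = 1
  act_mul : ∀ g h v, act (g * h) v = act g (act h v)
  sec_mul : ∀ g h v, sec (g * h) v = sec g (act h v) * sec h v

/-- Word length with respect to a finite generating set `S`. -/
noncomputable def wordLength {G : Type*} [Group G] (S : Finset G) (g : G) : ℕ :=
  sInf {n | ∃ w : List G, (∀ s ∈ w, s ∈ S) ∧ w.length = n ∧ w.prod = g}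

/-- The contraction coefficient `η_{p,n} ∈ [0,∞]`: the limsup of
`(Σ_{v ∈ X^n} l(g|_v)^p)^{1/p} / l(g)` as `l(g) → ∞` (along the filter generated by
the sets `{g : l(g) ≥ m}`).  Words of length `n` are encoded as functions `Fin n → X`. -/
noncomputable def eta {X G : Type*} [Fintype X] [Group G]
    (A : SelfSimilarGroup X G) (S : Finset G) (p : ℝ) (n : ℕ) : ℝ≥0∞ :=
  Filter.limsup
    (fun g : G =>
      (∑ f : Fin n → X, (wordLength S (A.sec g (List.ofFn f)) : ℝ≥0∞) ^ p) ^ (1 / p)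
        / (wordLength S g : ℝ≥0∞))
    (Filter.comap (wordLength S) Filter.atTop)

/-- `N` is the nucleus of a contracting self-similar group: a finite subset containing `1`,
closed under sections, absorbing all sections of every element at deep enough levels. -/
def SelfSimilarGroup.IsNucleus {X G : Type*} [Group G]
    (A : SelfSimilarGroup X G) (N : Finset G) : Prop :=
  (1 : G) ∈ N ∧ (∀ g ∈ N, ∀ v : List X, A.sec g v ∈ N) ∧
    ∀ g : G, ∃ n₀ : ℕ, ∀ v : List X, n₀ ≤ v.length → A.sec g v ∈ N

/-! Write `F g` for the sum of `l(g|_v)^p` over the words `v` with `l(g|_v) ≥ l`. Beyond the depth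
at which the sections of `g` enter the nucleus they lie in `N ⊆ S` and have length `≤ 1 < l`, so
`F g` is finite. Splitting every word after its first `n₀` letters gives
`F g ≤ c · l(g)^p + Σ_{|v| = n₀} F (g|_v)`, where `c` accounts for the finitely many shorter words
through the bound `l(g|_v) ≤ M · l(g)`. Since `η_{p,n₀} < 1`, there are `q < 1` and `m` with
`Σ_{|v| = n₀} l(g|_v)^p ≤ q · l(g)^p` whenever `l(g) ≥ m`; in particular these sections are shorter
than `g`. Strong induction on `l(g)` then gives `F g ≤ C · l(g)^p` for any `C ≥ c / (1 - q)` that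
also dominates `F` on the finite ball of radius `m`. -/

section WordLength

variable {G : Type*} [Group G] {S : Finset G}

theorem submonoid_closure_eq_top_of_inv_mem (hgen : Subgroup.closure (S : Set G) = ⊤)
    (hsym : ∀ s ∈ S, s⁻¹ ∈ S) : Submonoid.closure (S : Set G) = ⊤ := by
  have hinv : (S : Set G)⁻¹ ⊆ S := fun s hs => by simpa using hsym _ hs
  rw [← Set.union_eq_left.mpr hinv, ← Subgroup.closure_toSubmonoid, hgen]
  rfl

theorem wordLength_le_length {w : List G} (hw : ∀ s ∈ w, s ∈ S) :
    wordLength S w.prod ≤ w.length :=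
  Nat.sInf_le ⟨w, hw, rfl, rfl⟩

theorem wordLength_one : wordLength S (1 : G) = 0 :=
  Nat.le_zero.mp (wordLength_le_length (w := []) (by simp))

theorem wordLength_le_one_of_mem {s : G} (hs : s ∈ S) : wordLength S s ≤ 1 := by
  simpa using wordLength_le_length (S := S) (w := [s]) (by simpa using hs)

theorem exists_list_length_eq_wordLength (hS : Submonoid.closure (S : Set G) = ⊤)
    (g : G) : ∃ w : List G, (∀ s ∈ w, s ∈ S) ∧ w.length = wordLength S g ∧ w.prod = g := by
  obtain ⟨w, hw, rfl⟩ := Submonoid.exists_list_of_mem_closure (hS ▸ Submonoid.mem_top g)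
  exact Nat.sInf_mem (s := {n | ∃ w : List G, (∀ s ∈ w, s ∈ S) ∧ w.length = n ∧ w.prod = _})
    ⟨w.length, w, hw, rfl, rfl⟩

theorem eq_one_of_wordLength_eq_zero (hS : Submonoid.closure (S : Set G) = ⊤) {g : G}
    (hg : wordLength S g = 0) : g = 1 := by
  obtain ⟨w, -, hlen, rfl⟩ := exists_list_length_eq_wordLength hS g
  rw [List.length_eq_zero_iff.mp (hlen.trans hg), List.prod_nil]

theorem wordLength_mul_le (hS : Submonoid.closure (S : Set G) = ⊤) (g h : G) :
    wordLength S (g * h) ≤ wordLength S g + wordLength S h := by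
  obtain ⟨u, hu, hlu, rfl⟩ := exists_list_length_eq_wordLength hS g
  obtain ⟨w, hw, hlw, rfl⟩ := exists_list_length_eq_wordLength hS h
  rw [← hlu, ← hlw, ← List.length_append, ← List.prod_append]
  exact wordLength_le_length fun s hs => (List.mem_append.mp hs).elim (hu s) (hw s)

theorem finite_setOf_wordLength_lt (hS : Submonoid.closure (S : Set G) = ⊤) (m : ℕ) :
    {g : G | wordLength S g < m}.Finite := by
  refine ((List.finite_length_lt S m).image fun w : List S => (w.map Subtype.val).prod).subset ?_
  intro g hg
  obtain ⟨w, hw, hlen, rfl⟩ := exists_list_length_eq_wordLength hS g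
  refine ⟨w.attach.map fun s => (⟨s.1, hw s.1 s.2⟩ : S), ?_, ?_⟩
  · simpa [hlen] using hg
  · simp [List.map_map, Function.comp_def]

end WordLength

namespace SelfSimilarGroup

variable {X G : Type*} [Group G] (A : SelfSimilarGroup X G) {S N : Finset G}

theorem IsNucleus.exists_wordLength_sec_le [Finite X] (hN : A.IsNucleus N) (hNS : N ⊆ S)
    (g : G) : ∃ B : ℕ, ∀ v : List X, wordLength S (A.sec g v) ≤ B := by
  obtain ⟨K, hK⟩ := hN.2.2 g
  obtain ⟨B, hB⟩ := ((List.finite_length_lt X K).image fun v => wordLength S (A.sec g v)).bddAbove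
  refine ⟨max B 1, fun v => ?_⟩
  rcases lt_or_ge v.length K with hv | hv
  · exact le_max_of_le_left (hB ⟨v, hv, rfl⟩)
  · exact le_max_of_le_right (wordLength_le_one_of_mem (hNS (hK v hv)))

theorem wordLength_sec_prod_le (hS : Submonoid.closure (S : Set G) = ⊤) {M : ℕ}
    (hM : ∀ s ∈ S, ∀ v : List X, wordLength S (A.sec s v) ≤ M) :
    ∀ w : List G, (∀ s ∈ w, s ∈ S) → ∀ v : List X, wordLength S (A.sec w.prod v) ≤ M * w.length
  | [], _, v => by simp [A.sec_one, wordLength_one]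
  | s :: w, hw, v => by
    rw [List.prod_cons, A.sec_mul, List.length_cons, mul_add_one, add_comm]
    exact (wordLength_mul_le hS _ _).trans <| add_le_add (hM s (hw s (by simp)) _)
      (wordLength_sec_prod_le hS hM w (fun t ht => hw t (by simp [ht])) v)

theorem exists_wordLength_sec_le_mul [Finite X] (hS : Submonoid.closure (S : Set G) = ⊤)
    (hN : A.IsNucleus N) (hNS : N ⊆ S) :
    ∃ M : ℕ, ∀ (g : G) (v : List X), wordLength S (A.sec g v) ≤ M * wordLength S g := by
  choose B hB using fun s : S => hN.exists_wordLength_sec_le A hNS s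
  obtain ⟨M, hM⟩ := (Set.finite_range B).bddAbove
  refine ⟨M, fun g v => ?_⟩
  obtain ⟨w, hw, hlen, rfl⟩ := exists_list_length_eq_wordLength hS g
  rw [← hlen]
  exact A.wordLength_sec_prod_le hS (fun s hs v => (hB ⟨s, hs⟩ v).trans (hM ⟨_, rfl⟩)) w hw v

noncomputable def longSectionSum (S : Finset G) (l : ℕ) (p : ℝ) (g : G) : ℝ≥0∞ :=
  ∑' v : List X,
    if l ≤ wordLength S (A.sec g v) then (wordLength S (A.sec g v) : ℝ≥0∞) ^ p else 0

theorem longSectionSum_one {l : ℕ} (hl : 0 < l) (p : ℝ) : A.longSectionSum S l p 1 = 0 := by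
  simp [longSectionSum, A.sec_one, wordLength_one, hl.ne']

theorem longSectionSum_ne_top [Finite X] (hN : A.IsNucleus N) (hNS : N ⊆ S) {l : ℕ} (hl : 1 < l)
    {p : ℝ} (hp : 0 ≤ p) (g : G) : A.longSectionSum S l p g ≠ ⊤ := by
  obtain ⟨K, hK⟩ := hN.2.2 g
  rw [longSectionSum, tsum_eq_sum (s := (List.finite_length_lt X K).toFinset)]
  · exact ENNReal.sum_ne_top.mpr fun v _ => by split_ifs <;> simp [hp]
  · intro v hv
    have hv : K ≤ v.length := by simpa using hv
    have := wordLength_le_one_of_mem (hNS (hK v hv))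
    rw [if_neg (by omega)]

end SelfSimilarGroup

theorem tsum_list_le_sum_add_sum_tsum_ofFn_append {X : Type*} [Fintype X] (φ : List X → ℝ≥0∞)
    (n : ℕ) :
    ∑' v, φ v ≤ ∑ v ∈ (List.finite_length_lt X n).toFinset, φ v +
      ∑ f : Fin n → X, ∑' u, φ (List.ofFn f ++ u) := by
  rw [← ENNReal.sum_add_tsum_compl (List.finite_length_lt X n).toFinset]
  gcongr
  have hsurj : Function.Surjective fun fu : (Fin n → X) × List X =>
      (⟨List.ofFn fu.1 ++ fu.2, by simp⟩ :
        ↥((List.finite_length_lt X n).toFinset : Set (List X))ᶜ) := by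
    rintro ⟨v, hv⟩
    obtain ⟨w, u, rfl, rfl⟩ : ∃ w u, v = w ++ u ∧ w.length = n :=
      ⟨v.take n, v.drop n, (List.take_append_drop n v).symm, by simpa using hv⟩
    exact ⟨(fun i => w[i], u), by simp [List.ofFn_getElem]⟩
  calc _ ≤ _ := ENNReal.tsum_le_tsum_comp_of_surjective hsurj (fun v => φ v)
    _ = _ := by rw [ENNReal.tsum_prod', tsum_fintype]

theorem lt_of_sum_rpow_le_mul_rpow {ι : Type*} [Fintype ι] {a : ι → ℕ} {b : ℕ} {p : ℝ}
    (hp : 0 < p) {q : ℝ≥0} (hq : q < 1) (hb : 0 < b)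
    (h : ∑ i, (a i : ℝ≥0∞) ^ p ≤ q * (b : ℝ≥0∞) ^ p) (i : ι) : a i < b := by
  have hbp : (b : ℝ≥0∞) ^ p ≠ 0 := by positivity
  have : (a i : ℝ≥0∞) ^ p < (b : ℝ≥0∞) ^ p :=
    calc _ ≤ ∑ i, (a i : ℝ≥0∞) ^ p :=
          Finset.single_le_sum (f := fun i => (a i : ℝ≥0∞) ^ p) (by simp) (by simp)
      _ ≤ q * (b : ℝ≥0∞) ^ p := h
      _ < (b : ℝ≥0∞) ^ p := by
          simpa using ENNReal.mul_lt_mul_left hbp (by simp [hp.le]) (ENNReal.coe_lt_one_iff.mpr hq)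
  exact_mod_cast (ENNReal.rpow_lt_rpow_iff hp).mp this

theorem exists_le_mul_rpow_of_le_add_sum {G ι : Type*} [Fintype ι] {F : G → ℝ≥0∞} {L : G → ℕ}
    {child : G → ι → G} {p : ℝ} (hp : 0 < p) {c q : ℝ≥0} (hq : q < 1) {m : ℕ}
    (hball : {g | L g < m}.Finite) (hF : ∀ g, F g ≠ ⊤) (hF0 : ∀ g, L g = 0 → F g = 0)
    (hcontr : ∀ g, m ≤ L g → ∑ i, (L (child g i) : ℝ≥0∞) ^ p ≤ q * (L g : ℝ≥0∞) ^ p)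
    (hrec : ∀ g, m ≤ L g → F g ≤ c * (L g : ℝ≥0∞) ^ p + ∑ i, F (child g i)) :
    ∃ C : ℝ≥0, 0 < C ∧ ∀ g, F g ≤ C * (L g : ℝ≥0∞) ^ p := by
  obtain ⟨C₀, hC₀⟩ : ∃ C₀ : ℝ≥0, ∀ g, L g < m → F g ≤ C₀ := by
    obtain ⟨C₀, h⟩ := (hball.image fun g => (F g).toNNReal).bddAbove
    exact ⟨C₀, fun g hg => ENNReal.coe_toNNReal (hF g) ▸ ENNReal.coe_le_coe.mpr (h ⟨g, hg, rfl⟩)⟩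
  set C : ℝ≥0 := max (max C₀ (c / (1 - q))) 1
  have hC : (c : ℝ≥0∞) + C * q ≤ C := by
    have hc : c ≤ C * (1 - q) :=
      (div_le_iff₀ (tsub_pos_of_lt hq)).mp (le_max_of_le_left (le_max_right _ _))
    exact_mod_cast calc c + C * q ≤ C * (1 - q) + C * q := by gcongr
      _ = C := by rw [← mul_add, tsub_add_cancel_of_le hq.le, mul_one]
  suffices ∀ k g, L g = k → F g ≤ C * (k : ℝ≥0∞) ^ p from
    ⟨C, lt_max_of_lt_right one_pos, fun g => this _ g rfl⟩
  intro k
  induction k using Nat.strong_induction_on with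
  | _ k ih =>
  intro g rfl
  rcases Nat.eq_zero_or_pos (L g) with hzero | hpos
  · simp [hF0 g hzero]
  rcases lt_or_ge (L g) m with hsmall | hlarge
  · calc F g ≤ C₀ := hC₀ g hsmall
      _ ≤ C := by exact_mod_cast le_max_of_le_left (le_max_left _ _)
      _ ≤ C * (L g : ℝ≥0∞) ^ p :=
        le_mul_of_one_le_right' (ENNReal.one_le_rpow (by exact_mod_cast hpos) hp)
  have hchild := lt_of_sum_rpow_le_mul_rpow hp hq hpos (hcontr g hlarge)
  calc F g ≤ c * (L g : ℝ≥0∞) ^ p + ∑ i, F (child g i) := hrec g hlarge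
    _ ≤ c * (L g : ℝ≥0∞) ^ p + ∑ i, C * (L (child g i) : ℝ≥0∞) ^ p := by
        gcongr with i; exact ih _ (hchild i) _ rfl
    _ ≤ c * (L g : ℝ≥0∞) ^ p + C * (q * (L g : ℝ≥0∞) ^ p) := by
        rw [← Finset.mul_sum]; gcongr; exact hcontr g hlarge
    _ = (c + C * q) * (L g : ℝ≥0∞) ^ p := by ring
    _ ≤ C * (L g : ℝ≥0∞) ^ p := by gcongr

namespace SelfSimilarGroup

variable {X G : Type*} [Fintype X] [Group G] (A : SelfSimilarGroup X G) {S : Finset G}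

theorem exists_sum_rpow_le_of_eta_lt_one {p : ℝ} (hp : 0 < p) {n : ℕ} (h : eta A S p n < 1) :
    ∃ q : ℝ≥0, q < 1 ∧ ∃ m : ℕ, ∀ g : G, m ≤ wordLength S g →
      ∑ f : Fin n → X, (wordLength S (A.sec g (List.ofFn f)) : ℝ≥0∞) ^ p
        ≤ q * (wordLength S g : ℝ≥0∞) ^ p := by
  obtain ⟨ρ, hηρ, hρ⟩ := ENNReal.lt_iff_exists_nnreal_btwn.mp h
  obtain ⟨m, hm⟩ := eventually_atTop.mp (eventually_comap.mp (eventually_lt_of_limsup_lt hηρ))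
  refine ⟨ρ ^ p, NNReal.rpow_lt_one (ENNReal.coe_lt_one_iff.mp hρ) hp, max m 1, fun g hg => ?_⟩
  have hL : (wordLength S g : ℝ≥0∞) ≠ 0 := by
    simp only [ne_eq, Nat.cast_eq_zero]; omega
  have hratio := hm _ (le_of_max_le_left hg) g rfl
  rw [ENNReal.div_lt_iff (Or.inl hL) (Or.inl (ENNReal.natCast_ne_top _))] at hratio
  calc ∑ f : Fin n → X, (wordLength S (A.sec g (List.ofFn f)) : ℝ≥0∞) ^ p
      = ((∑ f : Fin n → X, (wordLength S (A.sec g (List.ofFn f)) : ℝ≥0∞) ^ p) ^ (1 / p)) ^ p := by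
        rw [← ENNReal.rpow_mul, one_div_mul_cancel hp.ne', ENNReal.rpow_one]
    _ ≤ (ρ * (wordLength S g : ℝ≥0∞)) ^ p := ENNReal.rpow_le_rpow hratio.le hp.le
    _ = ↑(ρ ^ p) * (wordLength S g : ℝ≥0∞) ^ p := by
        rw [ENNReal.mul_rpow_of_nonneg _ _ hp.le, ENNReal.coe_rpow_of_nonneg _ hp.le]

theorem longSectionSum_le_add_sum {M : ℕ}
    (hM : ∀ (g : G) (v : List X), wordLength S (A.sec g v) ≤ M * wordLength S g)
    (l : ℕ) {p : ℝ} (hp : 0 ≤ p) (n : ℕ) (g : G) :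
    A.longSectionSum S l p g ≤
      ↑((List.finite_length_lt X n).toFinset.card * (M : ℝ≥0) ^ p) * (wordLength S g : ℝ≥0∞) ^ p
        + ∑ f : Fin n → X, A.longSectionSum S l p (A.sec g (List.ofFn f)) := by
  refine (tsum_list_le_sum_add_sum_tsum_ofFn_append _ n).trans (add_le_add ?_ ?_)
  · refine (Finset.sum_le_card_nsmul _ _ ((M * wordLength S g : ℝ≥0∞) ^ p) fun v _ => ?_).trans ?_
    · split_ifs
      · gcongr; exact_mod_cast hM g v
      · exact zero_le
    · rw [nsmul_eq_mul, ENNReal.mul_rpow_of_nonneg _ _ hp, ← mul_assoc]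
      push_cast [ENNReal.coe_rpow_of_nonneg _ hp]
      rfl
  · simp [longSectionSum, A.sec_append]

end SelfSimilarGroup

theorem sum_long_sections_le_general {X G : Type*} [Fintype X] [Group G]
    (A : SelfSimilarGroup X G) (S N : Finset G)
    (hgen : Subgroup.closure (S : Set G) = ⊤)
    (hsym : ∀ s ∈ S, s⁻¹ ∈ S)
    (hN : A.IsNucleus N) (hNS : N ⊆ S)
    (p : ℝ) (hp : 1 ≤ p)
    (hcontr : ∃ n₀ : ℕ, 1 ≤ n₀ ∧ eta A S p n₀ < 1)
    (l : ℕ) (hl : 2 ≤ l) :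
    ∃ C : ℝ≥0, 0 < C ∧ ∀ g : G,
      (∑' v : List X,
          if l ≤ wordLength S (A.sec g v) then (wordLength S (A.sec g v) : ℝ≥0∞) ^ p else 0)
        ≤ (C : ℝ≥0∞) * (wordLength S g : ℝ≥0∞) ^ p := by
  obtain ⟨n₀, -, hη⟩ := hcontr
  have hp₀ : 0 < p := by linarith
  have hS := submonoid_closure_eq_top_of_inv_mem hgen hsym
  obtain ⟨q, hq, m, hm⟩ := A.exists_sum_rpow_le_of_eta_lt_one hp₀ hη
  obtain ⟨M, hM⟩ := A.exists_wordLength_sec_le_mul hS hN hNS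
  exact exists_le_mul_rpow_of_le_add_sum hp₀ hq (finite_setOf_wordLength_lt hS m)
    (A.longSectionSum_ne_top hN hNS (by omega) hp₀.le)
    (fun g hg => eq_one_of_wordLength_eq_zero hS hg ▸ A.longSectionSum_one (by omega) p) hm
    (fun g _ => A.longSectionSum_le_add_sum hM l hp₀.le n₀ g)

/-- Proposition 4.4. If `G` is contracting with nucleus `N ⊆ S`, `p ≥ 1`
and `η_{p,n₀} < 1` for some `n₀ ≥ 1`, then for every `l ≥ 2` there exists `C > 0` such that
for every `g`, `Σ_{v ∈ X*, l(g|_v) ≥ l} l(g|_v)^p ≤ C · l(g)^p` (the sum being finite). -/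
theorem sum_long_sections_le {X G : Type*} [Fintype X] [Nonempty X] [Group G]
    (A : SelfSimilarGroup X G) (S N : Finset G)
    (hgen : Subgroup.closure (S : Set G) = ⊤)
    (hsym : ∀ s ∈ S, s⁻¹ ∈ S)
    (hN : A.IsNucleus N) (hNS : N ⊆ S)
    (p : ℝ) (hp : 1 ≤ p)
    (hcontr : ∃ n₀ : ℕ, 1 ≤ n₀ ∧ eta A S p n₀ < 1)
    (l : ℕ) (hl : 2 ≤ l) :
    ∃ C : ℝ≥0, 0 < C ∧ ∀ g : G,
      (∑' v : List X,
          if l ≤ wordLength S (A.sec g v) then (wordLength S (A.sec g v) : ℝ≥0∞) ^ p else 0)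
        ≤ (C : ℝ≥0∞) * (wordLength S g : ℝ≥0∞) ^ p :=
  sum_long_sections_le_general A S N hgen hsym hN hNS p hp hcontr l hl
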